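/- arXiv:1502.02278 — 8 statements merged into one kernel-verified Lean document; each statement's English description precedes it below -/
import Mathlib

section
/- Let A be a (d+1)×(d+1) real symmetric matrix and let p₁,…,pₙ and q₁,…,qₘ be points in ℝ^d, with p̂ᵢ, q̂ⱼ their lifts to ℝ^{d+1} obtained by appending a 1. Suppose λ₁,…,λₙ and μ₁,…,μₘ are nonnegative reals, not all zero, such that ∑ᵢ λᵢ p̂ᵢ p̂ᵢᵀ = ∑ⱼ μⱼ q̂ⱼ q̂ⱼᵀ. Then it is impossible that q̂ⱼᵀ A q̂ⱼ < 0 < p̂ᵢᵀ A p̂ᵢ for all i, j. -/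
open Matrix BigOperators

/-- The lift of a point in `ℝ^d` to `ℝ^(d+1)` obtained by appending a `1`. -/
def hat {d : ℕ} (x : Fin d → ℝ) : Fin (d + 1) → ℝ := Fin.snoc x 1

lemma quad_sum {N D : ℕ} (A : Matrix (Fin D) (Fin D) ℝ) (c : Fin N → ℝ) (v : Fin N → Fin D → ℝ) :
    ∑ k, ∑ l, (∑ i, c i • vecMulVec (v i) (v i)) k l * A k l
      = ∑ i, c i * (v i ⬝ᵥ A.mulVec (v i)) := by
  simp only [Matrix.sum_apply, Matrix.smul_apply, vecMulVec_apply, smul_eq_mul,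
    dotProduct, mulVec, Finset.mul_sum, Finset.sum_mul]
  calc (∑ k, ∑ l, ∑ i, c i * (v i k * v i l) * A k l)
      = ∑ k, ∑ i, ∑ l, c i * (v i k * v i l) * A k l :=
        Finset.sum_congr rfl (fun _ _ => Finset.sum_comm)
    _ = ∑ i, ∑ k, ∑ l, c i * (v i k * v i l) * A k l := Finset.sum_comm
    _ = _ := by
        apply Finset.sum_congr rfl; intro i _
        apply Finset.sum_congr rfl; intro k _
        apply Finset.sum_congr rfl; intro l _
        ring

lemma hat_last {d : ℕ} (x : Fin d → ℝ) : hat x (Fin.last d) = 1 := by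
  simp [hat]

theorem stmt0 {d n m : ℕ} (A : Matrix (Fin (d + 1)) (Fin (d + 1)) ℝ) (hA : Aᵀ = A)
    (p : Fin n → Fin d → ℝ) (q : Fin m → Fin d → ℝ)
    (lam : Fin n → ℝ) (mu : Fin m → ℝ)
    (hlam : ∀ i, 0 ≤ lam i) (hmu : ∀ j, 0 ≤ mu j)
    (hne : (∃ i, lam i ≠ 0) ∨ (∃ j, mu j ≠ 0))
    (heq : ∑ i, lam i • vecMulVec (hat (p i)) (hat (p i))
         = ∑ j, mu j • vecMulVec (hat (q j)) (hat (q j))) :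
    ¬ (∀ (i : Fin n) (j : Fin m),
        hat (q j) ⬝ᵥ A.mulVec (hat (q j)) < 0 ∧
        0 < hat (p i) ⬝ᵥ A.mulVec (hat (p i))) := by
  intro h
  -- last-entry identity: ∑ lam = ∑ mu
  have hlast : ∑ i, lam i = ∑ j, mu j := by
    have := congrArg (fun M => M (Fin.last d) (Fin.last d)) heq
    simpa [Matrix.sum_apply, vecMulVec_apply, hat_last] using this
  -- key trace identity
  have key : ∑ i, lam i * (hat (p i) ⬝ᵥ A.mulVec (hat (p i)))
           = ∑ j, mu j * (hat (q j) ⬝ᵥ A.mulVec (hat (q j))) := by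
    have := congrArg (fun M => ∑ k, ∑ l, M k l * A k l) heq
    simpa [quad_sum] using this
  rcases hne with ⟨i₀, hi₀⟩ | ⟨j₀, hj₀⟩
  · have hi₀' : 0 < lam i₀ := lt_of_le_of_ne (hlam i₀) (Ne.symm hi₀)
    rcases Nat.eq_zero_or_pos m with hm | hm
    · -- m = 0 : RHS of hlast is empty, so all lam are 0
      have : ∑ i, lam i = 0 := by
        rw [hlast]; subst hm; simp
      have hall := (Finset.sum_eq_zero_iff_of_nonneg (fun i _ => hlam i)).mp this
      exact hi₀ (hall i₀ (Finset.mem_univ i₀))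
    · obtain ⟨j₁ : Fin m⟩ := Fin.pos_iff_nonempty.mp hm
      have hL : 0 < ∑ i, lam i * (hat (p i) ⬝ᵥ A.mulVec (hat (p i))) := by
        apply Finset.sum_pos' (fun i _ => mul_nonneg (hlam i) (le_of_lt (h i j₁).2))
        exact ⟨i₀, Finset.mem_univ i₀, mul_pos hi₀' (h i₀ j₁).2⟩
      have hR : ∑ j, mu j * (hat (q j) ⬝ᵥ A.mulVec (hat (q j))) ≤ 0 :=
        Finset.sum_nonpos (fun j _ => mul_nonpos_of_nonneg_of_nonpos (hmu j) (le_of_lt (h i₀ j).1))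
      linarith [key]
  · have hj₀' : 0 < mu j₀ := lt_of_le_of_ne (hmu j₀) (Ne.symm hj₀)
    rcases Nat.eq_zero_or_pos n with hn | hn
    · have : ∑ j, mu j = 0 := by
        rw [← hlast]; subst hn; simp
      have hall := (Finset.sum_eq_zero_iff_of_nonneg (fun j _ => hmu j)).mp this
      exact hj₀ (hall j₀ (Finset.mem_univ j₀))
    · obtain ⟨i₁ : Fin n⟩ := Fin.pos_iff_nonempty.mp hn
      have hR : ∑ j, mu j * (hat (q j) ⬝ᵥ A.mulVec (hat (q j))) < 0 := by
        have := Finset.sum_lt_sum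
          (f := fun j => mu j * (hat (q j) ⬝ᵥ A.mulVec (hat (q j)))) (g := fun _ => (0:ℝ))
          (fun j _ => mul_nonpos_of_nonneg_of_nonpos (hmu j) (le_of_lt (h i₁ j).1))
          ⟨j₀, Finset.mem_univ j₀, mul_neg_of_pos_of_neg hj₀' (h i₁ j₀).1⟩
        simpa using this
      have hL : 0 ≤ ∑ i, lam i * (hat (p i) ⬝ᵥ A.mulVec (hat (p i))) :=
        Finset.sum_nonneg (fun i _ => mul_nonneg (hlam i) (le_of_lt (h i j₀).2))
      linarith [key]
end

section
/- Let p₁,…,pₙ and q₁,…,qₘ be points in ℝ^d. If there is no (d+1)×(d+1) real symmetric matrix A with q̂ⱼᵀ A q̂ⱼ < 0 < p̂ᵢᵀ A p̂ᵢ for all i,j, then there exist nonnegative reals λ₁,…,λₙ, μ₁,…,μₘ, not all zero, with ∑ᵢ λᵢ p̂ᵢ p̂ᵢᵀ = ∑ⱼ μⱼ q̂ⱼ q̂ⱼᵀ. -/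
open Matrix BigOperators

theorem stmt2 {d n m : ℕ} (p : Fin n → Fin d → ℝ) (q : Fin m → Fin d → ℝ)
    (hsep : ¬ ∃ A : Matrix (Fin (d + 1)) (Fin (d + 1)) ℝ, Aᵀ = A ∧
      ∀ (i : Fin n) (j : Fin m),
        hat (q j) ⬝ᵥ A.mulVec (hat (q j)) < 0 ∧
        0 < hat (p i) ⬝ᵥ A.mulVec (hat (p i))) :
    ∃ (lam : Fin n → ℝ) (mu : Fin m → ℝ),
      (∀ i, 0 ≤ lam i) ∧ (∀ j, 0 ≤ mu j) ∧
      ((∃ i, lam i ≠ 0) ∨ (∃ j, mu j ≠ 0)) ∧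
      ∑ i, lam i • vecMulVec (hat (p i)) (hat (p i))
        = ∑ j, mu j • vecMulVec (hat (q j)) (hat (q j)) := by
  classical
  -- degenerate cases
  rcases Nat.eq_zero_or_pos n with hn | hn
  · subst hn
    exact absurd ⟨0, by simp, fun i => i.elim0⟩ hsep
  rcases Nat.eq_zero_or_pos m with hm | hm
  · subst hm
    exact absurd ⟨0, by simp, fun i j => j.elim0⟩ hsep
  -- the Veronese map into the pi space
  set φ : (Fin d → ℝ) → ((Fin (d + 1) × Fin (d + 1)) → ℝ) := fun x ij => hat x ij.1 * hat x ij.2 with hφ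
  set S : Set ((Fin (d + 1) × Fin (d + 1)) → ℝ) := convexHull ℝ (Set.range (φ ∘ q)) with hS
  set T : Set ((Fin (d + 1) × Fin (d + 1)) → ℝ) := convexHull ℝ (Set.range (φ ∘ p)) with hT
  have hhatlast : ∀ x : Fin d → ℝ, hat x (Fin.last d) = 1 := fun x => Fin.snoc_last _ _
  -- the hulls intersect
  have hnd : ¬ Disjoint S T := by
    intro hdisj
    have hScomp : IsCompact S := (Set.finite_range _).isCompact_convexHull (𝕜 := ℝ)
    have hTcomp : IsCompact T := (Set.finite_range _).isCompact_convexHull (𝕜 := ℝ)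
    obtain ⟨f, u, v, hfu, huv, hfv⟩ :=
      geometric_hahn_banach_compact_closed (convex_convexHull ℝ _) hScomp
        (convex_convexHull ℝ _) hTcomp.isClosed hdisj
    set c : ℝ := (u + v) / 2 with hc
    have huc : u < c := by rw [hc]; linarith
    have hcv : c < v := by rw [hc]; linarith
    -- the value of f on φ x
    have key : ∀ z : (Fin (d + 1) × Fin (d + 1)) → ℝ, f z = ∑ ij : Fin (d + 1) × Fin (d + 1),
        z ij * f (fun kl => if ij = kl then (1 : ℝ) else 0) := by
      intro z
      conv_lhs => rw [pi_eq_sum_univ z]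
      rw [map_sum]
      simp [mul_comm]
    set B : Matrix (Fin (d + 1)) (Fin (d + 1)) ℝ := Matrix.of fun i j =>
      (f (fun kl => if (i, j) = kl then (1 : ℝ) else 0)
        + f (fun kl => if (j, i) = kl then (1 : ℝ) else 0)) / 2
      - (if i = Fin.last d ∧ j = Fin.last d then c else 0) with hB
    have hBsymm : Bᵀ = B := by
      ext i j
      simp only [hB, Matrix.transpose_apply, Matrix.of_apply, and_comm]
      ring
    have hquad : ∀ x : Fin d → ℝ,
        hat x ⬝ᵥ B.mulVec (hat x) = f (φ x) - c := by
      intro x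
      have h1 : hat x ⬝ᵥ B.mulVec (hat x)
          = ∑ i, ∑ j, hat x i * (B i j * hat x j) := by
        simp [dotProduct, Matrix.mulVec, Finset.mul_sum]
      have h2 : f (φ x) = ∑ i, ∑ j,
          hat x i * hat x j * f (fun kl => if (i, j) = kl then (1 : ℝ) else 0) := by
        rw [key (φ x), ← Finset.sum_product']
        rfl
      have h2' : f (φ x) = ∑ i, ∑ j,
          hat x i * hat x j * f (fun kl => if (j, i) = kl then (1 : ℝ) else 0) := by
        rw [h2, Finset.sum_comm]
        congr 1; ext i; congr 1; ext j; ring_nf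
      have h3 : ∑ i, ∑ j, hat x i *
          ((if i = Fin.last d ∧ j = Fin.last d then c else 0) * hat x j) = c := by
        rw [Finset.sum_eq_single (Fin.last d)]
        · rw [Finset.sum_eq_single (Fin.last d)]
          · simp [hhatlast]
          · intro b _ hb; simp [hb]
          · simp
        · intro b _ hb
          have : ∀ j, (if b = Fin.last d ∧ j = Fin.last d then c else 0) = 0 := by
            intro j; simp [hb]
          simp [this]
        · simp
      rw [h1]
      have : ∀ i j, hat x i * (B i j * hat x j)
          = (hat x i * hat x j * f (fun kl => if (i, j) = kl then (1 : ℝ) else 0)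
            + hat x i * hat x j * f (fun kl => if (j, i) = kl then (1 : ℝ) else 0)) / 2
            - hat x i * ((if i = Fin.last d ∧ j = Fin.last d then c else 0) * hat x j) := by
        intro i j
        simp only [hB, Matrix.of_apply]
        ring
      simp_rw [this, Finset.sum_sub_distrib, ← Finset.sum_div, Finset.sum_add_distrib]
      rw [← h2, ← h2', h3]
      ring
    refine hsep ⟨B, hBsymm, fun i j => ⟨?_, ?_⟩⟩
    · rw [hquad]
      have : f (φ (q j)) < u := hfu _ (subset_convexHull ℝ _ ⟨j, rfl⟩)
      linarith
    · rw [hquad]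
      have : v < f (φ (p i)) := hfv _ (subset_convexHull ℝ _ ⟨i, rfl⟩)
      linarith
  obtain ⟨z, hzS, hzT⟩ := Set.not_disjoint_iff.mp hnd
  rw [hS, convexHull_range_eq_exists_affineCombination] at hzS
  rw [hT, convexHull_range_eq_exists_affineCombination] at hzT
  obtain ⟨sq, wq, hwq0, hwq1, hwqz⟩ := hzS
  obtain ⟨sp, wp, hwp0, hwp1, hwpz⟩ := hzT
  rw [Finset.affineCombination_eq_linear_combination _ _ _ hwq1] at hwqz
  rw [Finset.affineCombination_eq_linear_combination _ _ _ hwp1] at hwpz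
  set lam : Fin n → ℝ := fun i => if i ∈ sp then wp i else 0 with hlam
  set mu : Fin m → ℝ := fun j => if j ∈ sq then wq j else 0 with hmu
  have hlamsum : ∑ i, lam i • (φ ∘ p) i = z := by
    rw [← hwpz, ← Finset.sum_subset (Finset.subset_univ sp)
      (fun i _ hi => by simp [hlam, hi])]
    exact Finset.sum_congr rfl fun i hi => by simp [hlam, hi]
  have hmusum : ∑ j, mu j • (φ ∘ q) j = z := by
    rw [← hwqz, ← Finset.sum_subset (Finset.subset_univ sq)
      (fun j _ hj => by simp [hmu, hj])]
    exact Finset.sum_congr rfl fun j hj => by simp [hmu, hj]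
  refine ⟨lam, mu, ?_, ?_, ?_, ?_⟩
  · intro i; rw [hlam]; by_cases h : i ∈ sp <;> simp [h, hwp0 i]
  · intro j; rw [hmu]; by_cases h : j ∈ sq <;> simp [h, hwq0 j]
  · left
    by_contra h
    push_neg at h
    have : ∑ i ∈ sp, wp i = 0 := by
      apply Finset.sum_eq_zero
      intro i hi
      have := h i
      rw [hlam] at this
      simpa [hi] using this
    rw [hwp1] at this; norm_num at this
  · ext k l
    have h := congrFun (hlamsum.trans hmusum.symm) (k, l)
    simp only [Finset.sum_apply, Pi.smul_apply, Function.comp, hφ, smul_eq_mul] at h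
    simp only [Matrix.sum_apply, Matrix.smul_apply, vecMulVec_apply, smul_eq_mul]
    exact h
end

section
/- Let p₁,…,pₙ and q₁,…,qₘ be configurations in ℝ^d whose combined affine span is all of ℝ^d, and suppose there exist strictly positive reals λ₁,…,λₙ, μ₁,…,μₘ with ∑ᵢ λᵢ p̂ᵢ p̂ᵢᵀ = ∑ⱼ μⱼ q̂ⱼ q̂ⱼᵀ. Then there exists an (n+m)×(n+m) real symmetric positive semidefinite matrix Ω of rank n+m−d−1 such that: (a) the entries of Ω in positions (i,i') with i ≠ i' both in {1,…,n} are zero, and similarly for positions (j,j') with j ≠ j' both in {n+1,…,n+m}; (b) [P̂, Q̂] Ω = 0, where [P̂, Q̂] is the (d+1)×(n+m) matrix whose columns are p̂₁,…,p̂ₙ, q̂₁,…,q̂ₘ. -/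
open Matrix BigOperators

/-- The `(d+1) × (n+m)` configuration matrix `[P̂, Q̂]` whose columns are the lifted
points `p̂₁, …, p̂ₙ, q̂₁, …, q̂ₘ`. -/
def confMat {d n m : ℕ} (p : Fin n → Fin d → ℝ) (q : Fin m → Fin d → ℝ) :
    Matrix (Fin (d + 1)) (Fin n ⊕ Fin m) ℝ :=
  Matrix.of fun a x => Sum.elim (fun i => hat (p i) a) (fun j => hat (q j) a) x

theorem key_stress {κ ι : Type} [Fintype κ] [Fintype ι] [DecidableEq ι] [DecidableEq κ]
    (A : Matrix κ ι ℝ) (w σ : ι → ℝ)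
    (hw : ∀ k, 0 < w k) (hσ : ∀ k, σ k = 1 ∨ σ k = -1)
    (hker : ∀ v : κ → ℝ, Aᵀ *ᵥ v = 0 → v = 0)
    (hbal : A * (Matrix.diagonal fun k => w k * σ k) * Aᵀ = 0) :
    ∃ Ω : Matrix ι ι ℝ, Ω.PosSemidef ∧ Ω.rank = Fintype.card ι - Fintype.card κ ∧
      (∀ x y, x ≠ y → σ x = σ y → Ω x y = 0) ∧ A * Ω = 0 := by
  classical
  set D : Matrix ι ι ℝ := Matrix.diagonal w with hD
  set Dh : Matrix ι ι ℝ := Matrix.diagonal (fun k => Real.sqrt (w k)) with hDhdef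
  set J : Matrix ι ι ℝ := Matrix.diagonal σ with hJ
  set S : Matrix κ κ ℝ := A * D * Aᵀ with hS
  have hDh2 : Dh * Dh = D := by
    rw [hDhdef, hD, Matrix.diagonal_mul_diagonal]
    have : (fun k => Real.sqrt (w k) * Real.sqrt (w k)) = w :=
      funext fun k => Real.mul_self_sqrt (hw k).le
    rw [this]
  have hDT : Dᵀ = D := Matrix.diagonal_transpose _
  have hDhT : Dhᵀ = Dh := Matrix.diagonal_transpose _
  have hJT : Jᵀ = J := Matrix.diagonal_transpose _
  have hST : Sᵀ = S := by
    rw [hS, Matrix.transpose_mul, Matrix.transpose_mul, Matrix.transpose_transpose, hDT,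
      Matrix.mul_assoc]
  -- S is positive definite
  have hSfact : S = (Dh * Aᵀ)ᵀ * (Dh * Aᵀ) := by
    rw [Matrix.transpose_mul, hDhT, Matrix.transpose_transpose, Matrix.mul_assoc A Dh,
      ← Matrix.mul_assoc Dh Dh, hDh2, ← Matrix.mul_assoc, hS]
  have hDinj : ∀ v : ι → ℝ, Dh *ᵥ v = 0 → v = 0 := by
    intro v hv
    funext k
    have h3 := congrFun hv k
    rw [hDhdef, Matrix.mulVec_diagonal] at h3
    have hs : Real.sqrt (w k) ≠ 0 := Real.sqrt_ne_zero'.mpr (hw k)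
    simpa [hs] using h3
  have hSpd : S.PosDef := by
    rw [Matrix.posDef_iff_dotProduct_mulVec]
    constructor
    · show Sᵀ = S; exact hST
    · intro x hx
      have h1 : dotProduct (star x) (S *ᵥ x)
          = dotProduct ((Dh * Aᵀ) *ᵥ x) ((Dh * Aᵀ) *ᵥ x) := by
        rw [hSfact, ← Matrix.mulVec_mulVec, star_trivial, Matrix.dotProduct_mulVec,
          Matrix.vecMul_transpose]
      rw [h1]
      have hnn : 0 ≤ dotProduct ((Dh * Aᵀ) *ᵥ x) ((Dh * Aᵀ) *ᵥ x) := by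
        unfold dotProduct
        exact Finset.sum_nonneg fun i _ => mul_self_nonneg _
      rcases hnn.lt_or_eq with h | h
      · exact h
      · exfalso
        apply hx
        apply hker
        have h0 : (Dh * Aᵀ) *ᵥ x = 0 := dotProduct_self_eq_zero.mp h.symm
        rw [← Matrix.mulVec_mulVec] at h0
        exact hDinj _ h0
  have hdet : IsUnit S.det := hSpd.det_pos.ne'.isUnit
  have hSS' : S * S⁻¹ = 1 := Matrix.mul_nonsing_inv S hdet
  have hS'S : S⁻¹ * S = 1 := Matrix.nonsing_inv_mul S hdet
  have hSinvT : (S⁻¹)ᵀ = S⁻¹ := by rw [Matrix.transpose_nonsing_inv, hST]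
  -- helper rewriting lemmas
  have hADAT : ∀ (X : Matrix κ ι ℝ), A * (D * (Aᵀ * X)) = S * X := by
    intro X
    rw [hS, Matrix.mul_assoc, Matrix.mul_assoc]
  have hSS : ∀ (X : Matrix κ ι ℝ), S * (S⁻¹ * X) = X := by
    intro X; rw [← Matrix.mul_assoc, hSS', Matrix.one_mul]
  have hDh2' : ∀ (X : Matrix ι ι ℝ), Dh * (Dh * X) = D * X := by
    intro X; rw [← Matrix.mul_assoc, hDh2]
  set K : Matrix ι ι ℝ := Dh * (Aᵀ * (S⁻¹ * (A * Dh))) with hK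
  set R : Matrix ι ι ℝ := D * (Aᵀ * (S⁻¹ * (A * D))) with hR
  set Ω : Matrix ι ι ℝ := D - R + J * (R * J) with hΩ
  have hKT : Kᵀ = K := by
    rw [hK]
    simp only [Matrix.transpose_mul, Matrix.transpose_transpose, hSinvT, hDhT]
    simp only [Matrix.mul_assoc]
  have hKK : K * K = K := by
    rw [hK]
    simp only [Matrix.mul_assoc]
    rw [hDh2' (Aᵀ * (S⁻¹ * (A * Dh))), hADAT, hSS]
  have e1 : (1 - K) * (1 - K) = 1 - K := by
    have h : (1 - K) * (1 - K) = 1 - K - K + K * K := by noncomm_ring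
    rw [h, hKK]; abel
  set N : Matrix ι ι ℝ := (1 - K) * Dh with hN
  set C : Matrix κ ι ℝ := A * (D * J) with hC
  have hNT : Nᵀ = Dh * (1 - K) := by
    rw [hN, Matrix.transpose_mul, Matrix.transpose_sub, Matrix.transpose_one, hKT, hDhT]
  have f1 : Nᵀ * N = D - R := by
    rw [hNT, hN, Matrix.mul_assoc, ← Matrix.mul_assoc (1 - K) (1 - K), e1, Matrix.sub_mul,
      Matrix.one_mul, Matrix.mul_sub, hDh2, hK]
    congr 1
    simp only [Matrix.mul_assoc]
    rw [hDh2' (Aᵀ * (S⁻¹ * (A * (Dh * Dh)))), hDh2, hR]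
  have hCT : Cᵀ = J * (D * Aᵀ) := by
    rw [hC, Matrix.transpose_mul, Matrix.transpose_mul, hDT, hJT, Matrix.mul_assoc]
  have f2 : Cᵀ * (S⁻¹ * C) = J * (R * J) := by
    rw [hCT, hC, hR]
    simp only [Matrix.mul_assoc]
  have hΩeq : Ω = Nᵀ * N + Cᵀ * (S⁻¹ * C) := by rw [hΩ, f1, f2]
  -- positive semidefiniteness
  have hCpsd : (Cᵀ * (S⁻¹ * C)).PosSemidef := by
    rw [← Matrix.mul_assoc]
    exact (hSpd.inv.posSemidef).conjTranspose_mul_mul_same C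
  have hPSD : Ω.PosSemidef := by
    rw [hΩeq]
    exact (Matrix.posSemidef_conjTranspose_mul_self N).add hCpsd
  -- A * Ω = 0
  have hbal' : ∀ (X : Matrix κ ι ℝ), A * (D * (J * (Aᵀ * X))) = 0 := by
    intro X
    have h : A * (D * (J * (Aᵀ * X))) = (A * (Matrix.diagonal fun k => w k * σ k) * Aᵀ) * X := by
      rw [hD, hJ, ← Matrix.mul_assoc (Matrix.diagonal w) (Matrix.diagonal σ),
        Matrix.diagonal_mul_diagonal]
      simp only [Matrix.mul_assoc]
    rw [h, hbal, Matrix.zero_mul]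
  have hJD : J * D = D * J := by
    rw [hJ, hD, Matrix.diagonal_mul_diagonal, Matrix.diagonal_mul_diagonal]
    have : (fun k => σ k * w k) = fun k => w k * σ k := funext fun k => mul_comm _ _
    rw [this]
  have hAΩ : A * Ω = 0 := by
    rw [hΩ, Matrix.mul_add, Matrix.mul_sub]
    have h1 : A * R = A * D := by
      rw [hR, hADAT, hSS]
    have h2 : A * (J * (R * J)) = 0 := by
      rw [hR]
      have h3 : J * (D * (Aᵀ * (S⁻¹ * (A * D))) * J)
          = J * (D * (Aᵀ * (S⁻¹ * (A * D) * J))) := by simp only [Matrix.mul_assoc]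
      rw [h3, ← Matrix.mul_assoc A J, ← Matrix.mul_assoc (A * J) D, Matrix.mul_assoc A J D, hJD,
        ← Matrix.mul_assoc A D J]
      have h4 := hbal' (S⁻¹ * (A * D) * J)
      rw [← Matrix.mul_assoc A D, ← Matrix.mul_assoc (A * D) J] at h4
      simp only [Matrix.mul_assoc] at h4 ⊢
      exact h4
    rw [h1, sub_self, h2, zero_add]
  have hΩT : Ωᵀ = Ω := hPSD.isHermitian
  have hΩAT : Ω * Aᵀ = 0 := by
    calc Ω * Aᵀ = (A * Ω)ᵀ := by rw [Matrix.transpose_mul, hΩT]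
    _ = 0 := by rw [hAΩ, Matrix.transpose_zero]
  -- rank computation
  have hkerΩ : LinearMap.ker Ω.mulVecLin = LinearMap.range (Aᵀ).mulVecLin := by
    ext z
    simp only [LinearMap.mem_ker, LinearMap.mem_range, Matrix.mulVecLin_apply]
    constructor
    · intro hz
      have h0 : dotProduct (star z) (Ω *ᵥ z) = 0 := by rw [hz, dotProduct_zero]
      have hsplit : dotProduct (star z) (Ω *ᵥ z)
          = dotProduct (N *ᵥ z) (N *ᵥ z) + dotProduct (star z) ((Cᵀ * (S⁻¹ * C)) *ᵥ z) := by
        rw [hΩeq, Matrix.add_mulVec, dotProduct_add]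
        congr 1
        rw [star_trivial, ← Matrix.mulVec_mulVec, Matrix.dotProduct_mulVec,
          Matrix.vecMul_transpose]
      have hN0 : N *ᵥ z = 0 := by
        rw [← dotProduct_self_eq_zero]
        have h2 := hCpsd.dotProduct_mulVec_nonneg z
        have h1 : 0 ≤ dotProduct (N *ᵥ z) (N *ᵥ z) := by
          unfold dotProduct
          exact Finset.sum_nonneg fun i _ => mul_self_nonneg _
        linarith [hsplit.symm.trans h0]
      have hDhz : Dh *ᵥ (z - Aᵀ *ᵥ (S⁻¹ *ᵥ (A *ᵥ (D *ᵥ z)))) = 0 := by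
        have h4 : Dh *ᵥ z - K *ᵥ (Dh *ᵥ z) = 0 := by
          rw [hN, ← Matrix.mulVec_mulVec, Matrix.sub_mulVec, Matrix.one_mulVec] at hN0
          exact hN0
        rw [hK] at h4
        simp only [← Matrix.mulVec_mulVec] at h4
        rw [show Dh *ᵥ (Dh *ᵥ z) = D *ᵥ z by rw [Matrix.mulVec_mulVec, hDh2]] at h4
        rw [Matrix.mulVec_sub]
        exact h4
      have hz2 := hDinj _ hDhz
      refine ⟨S⁻¹ *ᵥ (A *ᵥ (D *ᵥ z)), ?_⟩
      rw [sub_eq_zero] at hz2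
      exact hz2.symm
    · rintro ⟨v, rfl⟩
      rw [Matrix.mulVec_mulVec, hΩAT, Matrix.zero_mulVec]
  have hkerAT : LinearMap.ker (Aᵀ).mulVecLin = ⊥ := by
    rw [LinearMap.ker_eq_bot']
    intro v hv
    exact hker v hv
  have hrn1 := LinearMap.finrank_range_add_finrank_ker (Aᵀ).mulVecLin
  have hrn2 := LinearMap.finrank_range_add_finrank_ker Ω.mulVecLin
  rw [hkerAT, finrank_bot, Module.finrank_pi] at hrn1
  rw [hkerΩ, Module.finrank_pi] at hrn2
  have hle : Module.finrank ℝ (LinearMap.range (Aᵀ).mulVecLin) ≤ Fintype.card ι := by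
    simpa [Module.finrank_pi] using (LinearMap.range (Aᵀ).mulVecLin).finrank_le
  have hrank : Ω.rank = Fintype.card ι - Fintype.card κ := by
    show Module.finrank ℝ (LinearMap.range Ω.mulVecLin) = _
    omega
  refine ⟨Ω, hPSD, hrank, ?_, hAΩ⟩
  intro x y hxy hσxy
  have hRsym : (J * (R * J)) x y = σ x * R x y * σ y := by
    rw [hJ, ← Matrix.mul_assoc, Matrix.mul_diagonal, Matrix.diagonal_mul]
  have hσσ : σ x * σ y = 1 := by
    rw [hσxy]; rcases hσ y with h | h <;> rw [h] <;> norm_num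
  rw [hΩ, Matrix.add_apply, Matrix.sub_apply, hRsym, hD, Matrix.diagonal_apply_ne _ hxy]
  have h5 : σ x * R x y * σ y = σ x * σ y * R x y := by ring
  rw [h5, hσσ, one_mul]
  ring

theorem stmt5 {d n m : ℕ} (p : Fin n → Fin d → ℝ) (q : Fin m → Fin d → ℝ)
    (hspan : affineSpan ℝ (Set.range p ∪ Set.range q) = ⊤)
    (lam : Fin n → ℝ) (mu : Fin m → ℝ)
    (hlam : ∀ i, 0 < lam i) (hmu : ∀ j, 0 < mu j)
    (heq : ∑ i, lam i • vecMulVec (hat (p i)) (hat (p i))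
         = ∑ j, mu j • vecMulVec (hat (q j)) (hat (q j))) :
    ∃ Ω : Matrix (Fin n ⊕ Fin m) (Fin n ⊕ Fin m) ℝ,
      Ω.PosSemidef ∧
      Ω.rank = n + m - (d + 1) ∧
      (∀ i i' : Fin n, i ≠ i' → Ω (Sum.inl i) (Sum.inl i') = 0) ∧
      (∀ j j' : Fin m, j ≠ j' → Ω (Sum.inr j) (Sum.inr j') = 0) ∧
      confMat p q * Ω = 0 := by
  classical
  set A := confMat p q with hA
  set w : Fin n ⊕ Fin m → ℝ := Sum.elim lam mu with hw'
  set σ : Fin n ⊕ Fin m → ℝ := Sum.elim (fun _ => (1:ℝ)) (fun _ => (-1:ℝ)) with hσ'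
  have hw : ∀ k, 0 < w k := by rintro (i | j) <;> simp [hw', hlam, hmu]
  have hσ : ∀ k, σ k = 1 ∨ σ k = -1 := by rintro (i | j) <;> simp [hσ']
  -- the columns of A span ℝ^(d+1)
  have hker : ∀ v : Fin (d + 1) → ℝ, Aᵀ *ᵥ v = 0 → v = 0 := by
    intro v hv
    have hcol : ∀ y : Fin d → ℝ, (y ∈ Set.range p ∪ Set.range q) →
        dotProduct (hat y) v = 0 := by
      rintro y (⟨i, rfl⟩ | ⟨j, rfl⟩)
      · have := congrFun hv (Sum.inl i)
        simpa [Matrix.mulVec, dotProduct, Matrix.transpose_apply, hA, confMat] using this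
      · have := congrFun hv (Sum.inr j)
        simpa [Matrix.mulVec, dotProduct, Matrix.transpose_apply, hA, confMat] using this
    -- build the affine map x ↦ hat x ⬝ v
    set L : (Fin d → ℝ) →ₗ[ℝ] ℝ := ∑ b : Fin d, v (Fin.castSucc b) • LinearMap.proj b with hL
    have hLapp : ∀ x : Fin d → ℝ, L x = ∑ b : Fin d, v (Fin.castSucc b) * x b := by
      intro x
      simp [hL, LinearMap.sum_apply, LinearMap.smul_apply, LinearMap.proj_apply, smul_eq_mul]
    set f : (Fin d → ℝ) →ᵃ[ℝ] ℝ :=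
      L.toAffineMap + AffineMap.const ℝ (Fin d → ℝ) (v (Fin.last d)) with hf
    have hfapp : ∀ x, f x = ∑ b : Fin d, v (Fin.castSucc b) * x b + v (Fin.last d) := by
      intro x
      simp [hf, hLapp]
    have hfhat : ∀ y : Fin d → ℝ, f y = dotProduct (hat y) v := by
      intro y
      rw [hfapp, dotProduct, Fin.sum_univ_castSucc]
      congr 1
      · exact Finset.sum_congr rfl fun b _ => by
          rw [hat, Fin.snoc_castSucc, mul_comm]
      · rw [hat, Fin.snoc_last, one_mul]
    have hf0 : ∀ x, f x = 0 := by
      intro x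
      have hsub : Set.range p ∪ Set.range q ⊆
          (AffineSubspace.comap f (AffineSubspace.mk' (0:ℝ) ⊥) : Set (Fin d → ℝ)) := by
        intro y hy
        show y ∈ AffineSubspace.comap f (AffineSubspace.mk' (0:ℝ) ⊥)
        rw [AffineSubspace.mem_comap, AffineSubspace.mem_mk']
        simp [hfhat y, hcol y hy]
      have hle := affineSpan_le.mpr hsub
      rw [hspan] at hle
      have hx : x ∈ AffineSubspace.comap f (AffineSubspace.mk' (0:ℝ) ⊥) :=
        hle (AffineSubspace.mem_top ℝ _ x)
      rw [AffineSubspace.mem_comap, AffineSubspace.mem_mk'] at hx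
      simpa using hx
    have hlast : v (Fin.last d) = 0 := by
      have := hf0 0
      rw [hfapp 0] at this
      simpa using this
    funext a
    refine Fin.lastCases hlast ?_ a
    intro b
    have := hf0 (Pi.single b 1)
    rw [hfapp] at this
    rw [hlast, add_zero] at this
    rw [Finset.sum_eq_single b (fun c _ hc => by simp [Pi.single_eq_of_ne' hc.symm])
      (by simp)] at this
    simpa using this
  -- the balance condition
  have hbal : A * (Matrix.diagonal fun k => w k * σ k) * Aᵀ = 0 := by
    ext a b
    have h := congrFun (congrFun heq a) b
    simp only [Matrix.sum_apply, Matrix.smul_apply, Matrix.vecMulVec_apply, smul_eq_mul] at h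
    simp only [Matrix.mul_apply, Matrix.diagonal_apply, Matrix.transpose_apply,
      Matrix.zero_apply, mul_ite, mul_zero, ite_mul, zero_mul, Finset.sum_ite_eq,
      Finset.sum_ite_eq', Finset.mem_univ, if_true]
    rw [Fintype.sum_sum_type]
    have e1 : ∀ i : Fin n, A a (Sum.inl i) * (w (Sum.inl i) * σ (Sum.inl i)) * A b (Sum.inl i)
        = lam i * (hat (p i) a * hat (p i) b) := by
      intro i; simp [hA, confMat, hw', hσ']; ring
    have e2 : ∀ j : Fin m, A a (Sum.inr j) * (w (Sum.inr j) * σ (Sum.inr j)) * A b (Sum.inr j)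
        = -(mu j * (hat (q j) a * hat (q j) b)) := by
      intro j; simp [hA, confMat, hw', hσ']; ring
    rw [Finset.sum_congr rfl fun i _ => e1 i, Finset.sum_congr rfl fun j _ => e2 j]
    rw [Finset.sum_neg_distrib]
    rw [h]
    ring
  obtain ⟨Ω, hPSD, hrank, hzero, hAΩ⟩ := key_stress A w σ hw hσ hker hbal
  refine ⟨Ω, hPSD, ?_, ?_, ?_, hAΩ⟩
  · rw [hrank]; simp
  · intro i i' hii
    exact hzero _ _ (by simp [hii]) rfl
  · intro j j' hjj
    exact hzero _ _ (by simp [hjj]) rfl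
end

section
/- Let p₁,…,pₙ and q₁,…,qₘ be configurations in ℝ^d and suppose Ω is an (n+m)×(n+m) symmetric matrix of block form [[Λ, B],[Bᵀ, M]] where Λ (n×n) and M (m×m) are diagonal, and suppose [P̂, Q̂] Ω = 0, where [P̂, Q̂] has columns p̂₁,…,p̂ₙ, q̂₁,…,q̂ₘ. Then P̂ Λ P̂ᵀ = Q̂ M Q̂ᵀ. -/
open Matrix BigOperators

/-- The `(d+1) × n` matrix `P̂` whose columns are the lifted points `p̂ᵢ`. -/
def liftMat {d n : ℕ} (p : Fin n → Fin d → ℝ) : Matrix (Fin (d + 1)) (Fin n) ℝ :=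
  Matrix.of fun a i => hat (p i) a

theorem stmt6 {d n m : ℕ} (p : Fin n → Fin d → ℝ) (q : Fin m → Fin d → ℝ)
    (lam : Fin n → ℝ) (mu : Fin m → ℝ) (B : Matrix (Fin n) (Fin m) ℝ)
    (hstress : fromCols (liftMat p) (liftMat q)
        * fromBlocks (diagonal lam) B Bᵀ (diagonal mu) = 0) :
    liftMat p * diagonal lam * (liftMat p)ᵀ
      = liftMat q * diagonal mu * (liftMat q)ᵀ := by
  rw [fromCols_mul_fromBlocks] at hstress
  have h0 : (0 : Matrix (Fin (d+1)) (Fin n ⊕ Fin m) ℝ) =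
      fromCols (0 : Matrix (Fin (d+1)) (Fin n) ℝ) 0 := by
    ext i j; cases j <;> simp [fromCols]
  rw [h0, fromCols_inj.eq_iff] at hstress
  obtain ⟨h1, h2⟩ := hstress
  have e1 : liftMat p * diagonal lam = -(liftMat q * Bᵀ) := by
    rw [eq_neg_iff_add_eq_zero]; exact h1
  have e2 : liftMat p * B = -(liftMat q * diagonal mu) := by
    rw [eq_neg_iff_add_eq_zero]; exact h2
  have e3 : Bᵀ * (liftMat p)ᵀ = -(diagonal mu * (liftMat q)ᵀ) := by
    have := congrArg Matrix.transpose e2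
    simpa [Matrix.transpose_mul, Matrix.diagonal_transpose] using this
  calc liftMat p * diagonal lam * (liftMat p)ᵀ
      = -(liftMat q * Bᵀ) * (liftMat p)ᵀ := by rw [e1]
    _ = -(liftMat q * (Bᵀ * (liftMat p)ᵀ)) := by rw [Matrix.neg_mul, Matrix.mul_assoc]
    _ = liftMat q * diagonal mu * (liftMat q)ᵀ := by
        rw [e3]; simp [Matrix.mul_assoc]
end

section
/- Let p₁,…,pₙ and q₁,…,qₘ be configurations in ℝ^d such that the affine span of {p₁,…,pₙ} is all of ℝ^d and the affine span of {q₁,…,qₘ} is all of ℝ^d. Suppose Q is a d×d real symmetric matrix such that (pᵢ − qⱼ)ᵀ Q (pᵢ − qⱼ) = 0 for all i ∈ {1,…,n} and j ∈ {1,…,m}. Then Q = 0. -/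
open Matrix BigOperators

theorem stmt7 {d n m : ℕ} (p : Fin n → Fin d → ℝ) (q : Fin m → Fin d → ℝ)
    (hp : affineSpan ℝ (Set.range p) = ⊤) (hq : affineSpan ℝ (Set.range q) = ⊤)
    (Q : Matrix (Fin d) (Fin d) ℝ) (hQ : Qᵀ = Q)
    (h : ∀ (i : Fin n) (j : Fin m), (p i - q j) ⬝ᵥ Q.mulVec (p i - q j) = 0) :
    Q = 0 := by
  -- symmetry of the bilinear form
  have hsym : ∀ u v : Fin d → ℝ, u ⬝ᵥ Q.mulVec v = v ⬝ᵥ Q.mulVec u := by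
    intro u v
    rw [Matrix.dotProduct_mulVec, ← hQ, ← Matrix.mulVec_transpose, Matrix.transpose_transpose,
      dotProduct_comm, hQ]
  -- polarization
  have hpol : ∀ u v : Fin d → ℝ,
      (u - v) ⬝ᵥ Q.mulVec (u + v) = u ⬝ᵥ Q.mulVec u - v ⬝ᵥ Q.mulVec v := by
    intro u v
    simp only [sub_dotProduct, Matrix.mulVec_add, dotProduct_add]
    rw [hsym v u]
    ring
  -- vector spans are top
  have hps : Submodule.span ℝ (Set.range p -ᵥ Set.range p) = (⊤ : Submodule ℝ (Fin d → ℝ)) := by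
    have := congrArg AffineSubspace.direction hp
    rwa [direction_affineSpan, AffineSubspace.direction_top] at this
  have hqs : Submodule.span ℝ (Set.range q -ᵥ Set.range q) = (⊤ : Submodule ℝ (Fin d → ℝ)) := by
    have := congrArg AffineSubspace.direction hq
    rwa [direction_affineSpan, AffineSubspace.direction_top] at this
  -- first step: B(q j' - q j, 2 p i - q j - q j') = 0
  have step1 : ∀ (i : Fin n) (j j' : Fin m),
      (q j' - q j) ⬝ᵥ Q.mulVec ((2 : ℝ) • p i - q j - q j') = 0 := by
    intro i j j'
    have key := hpol (p i - q j') (p i - q j)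
    rw [h i j', h i j] at key
    have harg : (p i - q j') - (p i - q j) = q j - q j' := by ring
    have harg2 : (p i - q j') + (p i - q j) = (2 : ℝ) • p i - q j - q j' := by
      funext k; simp [two_smul]; ring
    rw [harg, harg2, sub_self] at key
    rw [hsym]
    calc (((2:ℝ) • p i - q j - q j') ⬝ᵥ Q.mulVec (q j' - q j))
        = - (((2:ℝ) • p i - q j - q j') ⬝ᵥ Q.mulVec (q j - q j')) := by
          rw [← dotProduct_neg, ← Matrix.mulVec_neg]; ring_nf
      _ = 0 := by rw [hsym, key, neg_zero]
  -- second step: B(q j' - q j, x) = 0 for all x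
  have step2 : ∀ (j j' : Fin m) (x : Fin d → ℝ), (q j' - q j) ⬝ᵥ Q.mulVec x = 0 := by
    intro j j' x
    have hbase : ∀ (i i' : Fin n), (q j' - q j) ⬝ᵥ Q.mulVec (p i - p i') = 0 := by
      intro i i'
      have h1 := step1 i j j'
      have h2 := step1 i' j j'
      have : (q j' - q j) ⬝ᵥ Q.mulVec
          (((2 : ℝ) • p i - q j - q j') - ((2 : ℝ) • p i' - q j - q j')) = 0 := by
        rw [Matrix.mulVec_sub, dotProduct_sub, h1, h2, sub_zero]
      have harg : ((2 : ℝ) • p i - q j - q j') - ((2 : ℝ) • p i' - q j - q j')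
          = (2 : ℝ) • (p i - p i') := by
        funext k; simp [two_smul]; ring
      rw [harg, Matrix.mulVec_smul, dotProduct_smul, smul_eq_mul] at this
      linarith
    have hx : x ∈ Submodule.span ℝ (Set.range p -ᵥ Set.range p) := by
      rw [hps]; trivial
    induction hx using Submodule.span_induction with
    | mem y hy =>
        obtain ⟨a, ⟨i, rfl⟩, b, ⟨i', rfl⟩, rfl⟩ := hy
        exact hbase i i'
    | zero => simp
    | add y z _ _ hy hz => rw [Matrix.mulVec_add, dotProduct_add, hy, hz, add_zero]
    | smul c y _ hy => rw [Matrix.mulVec_smul, dotProduct_smul, hy, smul_zero]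
  -- third step: Q.mulVec (q j' - q j) = 0
  have step3 : ∀ (j j' : Fin m), Q.mulVec (q j' - q j) = 0 := by
    intro j j'
    funext k
    have := step2 j j' (Pi.single k 1)
    rw [hsym] at this
    simpa [dotProduct, Pi.single_apply] using this
  -- fourth step: Q.mulVec x = 0 for all x
  have step4 : ∀ x : Fin d → ℝ, Q.mulVec x = 0 := by
    intro x
    have hx : x ∈ Submodule.span ℝ (Set.range q -ᵥ Set.range q) := by
      rw [hqs]; trivial
    induction hx using Submodule.span_induction with
    | mem y hy =>
        obtain ⟨a, ⟨j', rfl⟩, b, ⟨j, rfl⟩, rfl⟩ := hy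
        exact step3 j j'
    | zero => simp
    | add y z _ _ hy hz => rw [Matrix.mulVec_add, hy, hz, add_zero]
    | smul c y _ hy => rw [Matrix.mulVec_smul, hy, smul_zero]
  ext i k
  have := congrFun (step4 (Pi.single k 1)) i
  simpa [Matrix.mulVec, dotProduct, Pi.single_apply] using this
end

section
/- Let ω be an equilibrium stress for the complete bipartite framework (K(n,m), p, q) in ℝ^d, i.e., ∑ᵢ ωᵢⱼ (pᵢ − qⱼ) = 0 for each j and ∑ⱼ ωᵢⱼ (qⱼ − pᵢ) = 0 for each i, and set λᵢ = ∑ⱼ ωᵢⱼ and μⱼ = ∑ᵢ ωᵢⱼ. Then for every (d+1)×(d+1) symmetric matrix A: ∑ⱼ μⱼ q̂ⱼᵀ A q̂ⱼ = ∑_{i,j} ωᵢⱼ p̂ᵢᵀ A q̂ⱼ = ∑ᵢ λᵢ p̂ᵢᵀ A p̂ᵢ. -/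
open Matrix BigOperators

lemma hat_combo {d : ℕ} {ι : Type*} [Fintype ι] (c : ι → ℝ) (x : ι → Fin d → ℝ)
    (y : Fin d → ℝ) (h : ∑ i, c i • (x i - y) = 0) :
    ∑ i, c i • hat (x i) = (∑ i, c i) • hat y := by
  funext k
  induction k using Fin.lastCases with
  | last =>
    simp [hat, Finset.sum_apply]
  | cast k =>
    have hk := congrFun h k
    simp only [Finset.sum_apply, Pi.smul_apply, Pi.sub_apply, Pi.zero_apply, smul_eq_mul,
      mul_sub, Finset.sum_sub_distrib, sub_eq_zero, Finset.sum_mul] at hk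
    simpa [hat, Finset.sum_apply, Finset.sum_mul] using hk

theorem stmt11 {d n m : ℕ} (p : Fin n → Fin d → ℝ) (q : Fin m → Fin d → ℝ)
    (ω : Fin n → Fin m → ℝ)
    (heqQ : ∀ j, ∑ i, ω i j • (p i - q j) = 0)
    (heqP : ∀ i, ∑ j, ω i j • (q j - p i) = 0)
    (A : Matrix (Fin (d + 1)) (Fin (d + 1)) ℝ) (hA : Aᵀ = A) :
    (∑ j, (∑ i, ω i j) * (hat (q j) ⬝ᵥ A.mulVec (hat (q j)))
      = ∑ i, ∑ j, ω i j * (hat (p i) ⬝ᵥ A.mulVec (hat (q j)))) ∧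
    (∑ i, ∑ j, ω i j * (hat (p i) ⬝ᵥ A.mulVec (hat (q j)))
      = ∑ i, (∑ j, ω i j) * (hat (p i) ⬝ᵥ A.mulVec (hat (p i)))) := by
  constructor
  · rw [Finset.sum_comm]
    refine Finset.sum_congr rfl fun j _ => ?_
    have h := hat_combo (fun i => ω i j) p (q j) (heqQ j)
    calc (∑ i, ω i j) * (hat (q j) ⬝ᵥ A.mulVec (hat (q j)))
        = ((∑ i, ω i j) • hat (q j)) ⬝ᵥ A.mulVec (hat (q j)) := by
          rw [smul_dotProduct]; rfl
      _ = (∑ i, ω i j • hat (p i)) ⬝ᵥ A.mulVec (hat (q j)) := by rw [h]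
      _ = ∑ i, ω i j * (hat (p i) ⬝ᵥ A.mulVec (hat (q j))) := by
          simp [dotProduct, Finset.sum_apply, Finset.mul_sum, Finset.sum_mul, mul_assoc]
          rw [Finset.sum_comm]
  · refine Finset.sum_congr rfl fun i _ => ?_
    have h := hat_combo (fun j => ω i j) q (p i) (heqP i)
    calc ∑ j, ω i j * (hat (p i) ⬝ᵥ A.mulVec (hat (q j)))
        = ∑ j, (hat (p i) ᵥ* A) ⬝ᵥ (ω i j • hat (q j)) := by
          refine Finset.sum_congr rfl fun j _ => ?_
          rw [dotProduct_smul, dotProduct_mulVec]; rfl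
      _ = (hat (p i) ᵥ* A) ⬝ᵥ (∑ j, ω i j • hat (q j)) := by
          simp [dotProduct, Finset.sum_apply, Finset.mul_sum]
          rw [Finset.sum_comm]
      _ = (hat (p i) ᵥ* A) ⬝ᵥ ((∑ j, ω i j) • hat (p i)) := by rw [h]
      _ = (∑ j, ω i j) * (hat (p i) ⬝ᵥ A.mulVec (hat (p i))) := by
          rw [dotProduct_smul, dotProduct_mulVec]; rfl
end

section
/- Suppose ω is an equilibrium stress for (K(n,m), p, q) in ℝ^d with λᵢ = ∑ⱼ ωᵢⱼ ≥ 0 for all i, μⱼ = ∑ᵢ ωᵢⱼ ≥ 0 for all j, and at least one λᵢ or μⱼ strictly positive. Then there is no (d+1)×(d+1) symmetric matrix A with q̂ⱼᵀ A q̂ⱼ < 0 < p̂ᵢᵀ A p̂ᵢ for all i, j. -/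
open Matrix BigOperators

lemma dv_lin_right {N : ℕ} {ι : Type*} (s : Finset ι) (v : Fin N → ℝ)
    (A : Matrix (Fin N) (Fin N) ℝ) (c : ι → ℝ) (w : ι → Fin N → ℝ) :
    ∑ j ∈ s, c j * (v ⬝ᵥ A.mulVec (w j)) = v ⬝ᵥ A.mulVec (∑ j ∈ s, c j • w j) := by
  let L : (Fin N → ℝ) →ₗ[ℝ] ℝ :=
    { toFun := fun x => v ⬝ᵥ A.mulVec x
      map_add' := fun x y => by simp [Matrix.mulVec_add, dotProduct_add]
      map_smul' := fun c x => by simp [Matrix.mulVec_smul, dotProduct_smul] }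
  have : ∑ j ∈ s, c j * (v ⬝ᵥ A.mulVec (w j)) = ∑ j ∈ s, L (c j • w j) := by
    refine Finset.sum_congr rfl fun j _ => ?_
    rw [_root_.map_smul]; rfl
  rw [this, ← map_sum]; rfl

lemma dv_lin_left {N : ℕ} {ι : Type*} (s : Finset ι) (v : Fin N → ℝ)
    (A : Matrix (Fin N) (Fin N) ℝ) (c : ι → ℝ) (w : ι → Fin N → ℝ) :
    ∑ j ∈ s, c j * (w j ⬝ᵥ A.mulVec v) = (∑ j ∈ s, c j • w j) ⬝ᵥ A.mulVec v := by
  let L : (Fin N → ℝ) →ₗ[ℝ] ℝ :=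
    { toFun := fun x => x ⬝ᵥ A.mulVec v
      map_add' := fun x y => by simp [add_dotProduct]
      map_smul' := fun c x => by simp [smul_dotProduct] }
  have : ∑ j ∈ s, c j * (w j ⬝ᵥ A.mulVec v) = ∑ j ∈ s, L (c j • w j) := by
    refine Finset.sum_congr rfl fun j _ => ?_
    rw [_root_.map_smul]; rfl
  rw [this, ← map_sum]; rfl

theorem stmt12 {d n m : ℕ} (p : Fin n → Fin d → ℝ) (q : Fin m → Fin d → ℝ)
    (ω : Fin n → Fin m → ℝ)
    (heqQ : ∀ j, ∑ i, ω i j • (p i - q j) = 0)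
    (heqP : ∀ i, ∑ j, ω i j • (q j - p i) = 0)
    (hlam : ∀ i, 0 ≤ ∑ j, ω i j) (hmu : ∀ j, 0 ≤ ∑ i, ω i j)
    (hpos : (∃ i, 0 < ∑ j, ω i j) ∨ (∃ j, 0 < ∑ i, ω i j)) :
    ¬ ∃ A : Matrix (Fin (d + 1)) (Fin (d + 1)) ℝ, Aᵀ = A ∧
      ∀ (i : Fin n) (j : Fin m),
        hat (q j) ⬝ᵥ A.mulVec (hat (q j)) < 0 ∧
        0 < hat (p i) ⬝ᵥ A.mulVec (hat (p i)) := by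
  rintro ⟨A, -, h⟩
  have hQ : ∀ i, ∑ j, ω i j • hat (q j) = (∑ j, ω i j) • hat (p i) := by
    intro i
    funext k
    induction k using Fin.lastCases with
    | last => simp [hat, Finset.sum_apply]
    | cast a =>
      have h0 := congrFun (heqP i) a
      simp only [Finset.sum_apply, Pi.smul_apply, Pi.sub_apply, Pi.zero_apply,
        smul_eq_mul] at h0
      simp only [Finset.sum_apply, Pi.smul_apply, hat, Fin.snoc_castSucc, smul_eq_mul]
      have h1 : ∑ j, (ω i j * q j a - ω i j * p i a) = 0 := by
        rw [← h0]; exact Finset.sum_congr rfl fun j _ => by ring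
      rw [Finset.sum_sub_distrib, ← Finset.sum_mul] at h1
      linarith
  have hP : ∀ j, ∑ i, ω i j • hat (p i) = (∑ i, ω i j) • hat (q j) := by
    intro j
    funext k
    induction k using Fin.lastCases with
    | last => simp [hat, Finset.sum_apply]
    | cast a =>
      have h0 := congrFun (heqQ j) a
      simp only [Finset.sum_apply, Pi.smul_apply, Pi.sub_apply, Pi.zero_apply,
        smul_eq_mul] at h0
      simp only [Finset.sum_apply, Pi.smul_apply, hat, Fin.snoc_castSucc, smul_eq_mul]
      have h1 : ∑ i, (ω i j * p i a - ω i j * q j a) = 0 := by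
        rw [← h0]; exact Finset.sum_congr rfl fun i _ => by ring
      rw [Finset.sum_sub_distrib, ← Finset.sum_mul] at h1
      linarith
  set S := ∑ i, ∑ j, ω i j * (hat (p i) ⬝ᵥ A.mulVec (hat (q j))) with hS
  have hSP : S = ∑ i, (∑ j, ω i j) * (hat (p i) ⬝ᵥ A.mulVec (hat (p i))) := by
    refine Finset.sum_congr rfl fun i _ => ?_
    rw [dv_lin_right, hQ, Matrix.mulVec_smul, dotProduct_smul, smul_eq_mul]
  have hSQ : S = ∑ j, (∑ i, ω i j) * (hat (q j) ⬝ᵥ A.mulVec (hat (q j))) := by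
    rw [hS, Finset.sum_comm]
    refine Finset.sum_congr rfl fun j _ => ?_
    rw [dv_lin_left, hP, smul_dotProduct, smul_eq_mul]
  rcases hpos with ⟨i, hi⟩ | ⟨j, hj⟩
  · have j0 : Fin m := by
      rcases m with _ | m'
      · exfalso; simp at hi
      · exact 0
    have hgt : 0 < S := by
      rw [hSP]
      refine Finset.sum_pos' (fun i' _ => mul_nonneg (hlam i') (h i' j0).2.le)
        ⟨i, Finset.mem_univ i, mul_pos hi (h i j0).2⟩
    have hle : S ≤ 0 := by
      rw [hSQ]
      exact Finset.sum_nonpos fun j' _ =>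
        mul_nonpos_of_nonneg_of_nonpos (hmu j') (h i j').1.le
    linarith
  · have i0 : Fin n := by
      rcases n with _ | n'
      · exfalso; simp at hj
      · exact 0
    have hge : 0 ≤ S := by
      rw [hSP]
      exact Finset.sum_nonneg fun i' _ => mul_nonneg (hlam i') (h i' j).2.le
    have hlt : S < 0 := by
      rw [hSQ]
      have hkey := Finset.single_le_sum
        (f := fun j' => -((∑ i, ω i j') * (hat (q j') ⬝ᵥ A.mulVec (hat (q j')))))
        (fun j' _ => neg_nonneg.2
          (mul_nonpos_of_nonneg_of_nonpos (hmu j') (h i0 j').1.le))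
        (Finset.mem_univ j)
      simp only [Finset.sum_neg_distrib] at hkey
      have hj' : (∑ i, ω i j) * (hat (q j) ⬝ᵥ A.mulVec (hat (q j))) < 0 :=
        mul_neg_of_pos_of_neg hj (h i0 j).1
      linarith
    linarith
end

section
/- Let p₁,…,pₙ, q₁,…,qₘ ∈ ℝ^d with n ≥ d+2 or m ≥ d+2, and suppose the combined points are in quadric general position and cannot be strictly separated by a quadric; moreover suppose nonnegative λᵢ, μⱼ, not all zero, satisfy ∑ᵢ λᵢ p̂ᵢ p̂ᵢᵀ = ∑ⱼ μⱼ q̂ⱼ q̂ⱼᵀ. Then at least (d+1)(d+2)/2 + 1 of the coefficients λ₁,…,λₙ, μ₁,…,μₘ are strictly positive; in particular n + m ≥ (d+1)(d+2)/2 + 1. -/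
open Matrix BigOperators

/-- The Veronese map `x ↦ x̂ x̂ᵀ`. -/
def ver {d : ℕ} (x : Fin d → ℝ) : Matrix (Fin (d + 1)) (Fin (d + 1)) ℝ :=
  vecMulVec (hat x) (hat x)

theorem stmt16 {d n m : ℕ} (p : Fin n → Fin d → ℝ) (q : Fin m → Fin d → ℝ)
    (hsize : d + 2 ≤ n ∨ d + 2 ≤ m)
    -- quadric general position: every at most `(d+1)(d+2)/2` of the combined points
    -- have affinely independent Veronese images
    (hgp : ∀ S : Finset (Fin n ⊕ Fin m), S.card ≤ (d + 1) * (d + 2) / 2 →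
      AffineIndependent ℝ (fun x : S => ver (Sum.elim p q x.1)))
    -- the two parts cannot be strictly separated by a quadric
    (hsep : ¬ ∃ A : Matrix (Fin (d + 1)) (Fin (d + 1)) ℝ, Aᵀ = A ∧
      ∀ (i : Fin n) (j : Fin m),
        hat (q j) ⬝ᵥ A.mulVec (hat (q j)) < 0 ∧
        0 < hat (p i) ⬝ᵥ A.mulVec (hat (p i)))
    (lam : Fin n → ℝ) (mu : Fin m → ℝ)
    (hlam : ∀ i, 0 ≤ lam i) (hmu : ∀ j, 0 ≤ mu j)
    (hne : (∃ i, lam i ≠ 0) ∨ (∃ j, mu j ≠ 0))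
    (heq : ∑ i, lam i • vecMulVec (hat (p i)) (hat (p i))
         = ∑ j, mu j • vecMulVec (hat (q j)) (hat (q j))) :
    (d + 1) * (d + 2) / 2 + 1 ≤
      (Finset.univ.filter fun i => 0 < lam i).card
        + (Finset.univ.filter fun j => 0 < mu j).card ∧
    (d + 1) * (d + 2) / 2 + 1 ≤ n + m := by
  classical
  set c : Fin n ⊕ Fin m → ℝ := Sum.elim lam (fun j => -mu j) with hc
  -- sum of lambdas equals sum of mus (bottom-right entry of heq)
  have hentry := congrFun (congrFun heq (Fin.last d)) (Fin.last d)
  simp only [Matrix.sum_apply, Matrix.smul_apply, vecMulVec_apply, hat,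
    Fin.snoc_last, mul_one, smul_eq_mul] at hentry
  have hsum0 : ∑ x, c x = 0 := by
    rw [Fintype.sum_sum_type]
    simp [hc, hentry]
  have hver0 : ∑ x, c x • ver (Sum.elim p q x) = 0 := by
    rw [Fintype.sum_sum_type]
    simp only [hc, Sum.elim_inl, Sum.elim_inr, neg_smul, ver]
    rw [Finset.sum_neg_distrib, heq]
    simp
  set S : Finset (Fin n ⊕ Fin m) := Finset.univ.filter (fun x => c x ≠ 0) with hS
  have hScard : (d + 1) * (d + 2) / 2 + 1 ≤ S.card := by
    by_contra hcard
    push_neg at hcard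
    have hai := hgp S (Nat.lt_succ_iff.mp hcard)
    have h1 : ∑ x ∈ S, c x = 0 := by
      rw [hS, Finset.sum_filter_ne_zero]
      exact hsum0
    have h2 : ∑ x ∈ S, c x • ver (Sum.elim p q x) = 0 := by
      rw [← hver0]
      refine Finset.sum_subset (Finset.filter_subset _ _) ?_
      intro x _ hx
      simp only [hS, Finset.mem_filter, Finset.mem_univ, true_and, not_not] at hx
      simp [hx]
    have hzero := affineIndependent_iff.mp hai Finset.univ (fun x => c x.1)
      (by rw [← h1, ← Finset.sum_coe_sort S c])
      (by rw [← h2, ← Finset.sum_coe_sort S (fun x => c x • ver (Sum.elim p q x))])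
    obtain (⟨i, hi⟩ | ⟨j, hj⟩) := hne
    · have hmem : Sum.inl i ∈ S := by simp [hS, hc, hi]
      exact hi (hzero ⟨_, hmem⟩ (Finset.mem_univ _))
    · have hmem : Sum.inr j ∈ S := by simp [hS, hc, hj]
      exact hj (neg_eq_zero.mp (hzero ⟨_, hmem⟩ (Finset.mem_univ _)))
  have hpos : ∀ i, (0 < lam i) ↔ lam i ≠ 0 := fun i => (hlam i).lt_iff_ne.trans ne_comm
  have hpos' : ∀ j, (0 < mu j) ↔ mu j ≠ 0 := fun j => (hmu j).lt_iff_ne.trans ne_comm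
  have hcards : S.card = (Finset.univ.filter fun i => 0 < lam i).card
      + (Finset.univ.filter fun j => 0 < mu j).card := by
    simp only [Finset.card_filter, hS, hc]
    rw [Fintype.sum_sum_type]
    congr 1
    · exact Finset.sum_congr rfl fun i _ => by by_cases h : lam i = 0 <;> simp [hpos i, h]
    · exact Finset.sum_congr rfl fun j _ => by simp [hpos' j]
  constructor
  · omega
  · calc (d + 1) * (d + 2) / 2 + 1 ≤ _ := hScard
      _ ≤ n + m := by
        have := Finset.card_le_univ S
        simpa using this
end
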